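/- (Expectation decoupling for the inner step of FacTBRK.) Let V ∈ ℝ^{m₁×n×p}, let (T_V, prob_V) be a block sampling scheme on the row slices of V with V_ν∗V_ν^⊤ t-invertible for every ν ∈ T_V and largest block size d_{T_V}. Let Z‡ ∈ ℝ^{m₁×l×p} and X‡ ∈ ℝ^{n×l×p} satisfy V∗X‡ = Z‡. Let (Z_ω)_{ω∈Ω} be a finite family in ℝ^{m₁×l×p} with weights q(ω) ≥ 0, Σ_ω q(ω) = 1 (the distribution of the current outer iterate, sampled independently of ν), and let X ∈ ℝ^{n×l×p}. For ω ∈ Ω and ν ∈ T_V define X⁺(ω,ν) = X − V_ν^⊤∗(V_ν∗V_ν^⊤)^{-1}∗(V_ν∗X − (Z_ω)_ν). Then Σ_{ω∈Ω} Σ_{ν∈T_V} q(ω)·prob_V(ν)·‖X⁺(ω,ν) − X‡‖_F² ≤ (1 − σ_min(Σ_{ν∈T_V} prob_V(ν)·bcirc(P_{V_ν})))·‖X − X‡‖_F² + d_{T_V}·p·(Σ_{ν∈T_V} prob_V(ν)·‖(bcirc(V_ν)bcirc(V_ν)^⊤)^{-1}‖₂)·(Σ_{ω∈Ω} q(ω)·‖Z‡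 − Z_ω‖_F²). -/

import Mathlib

/-!
Unfolding along the second mode turns the t-product into multiplication by `bcirc`, so with
`A = bcirc V_ν`, `E = unfold (X - X‡)` and `R = unfold ((Z‡ - Z_ω)_ν)` the inner step is the
matrix block Kaczmarz step `Y = E - Aᵀ (A Aᵀ)⁻¹ (A E + R)`. Its Gram matrix splits exactly as
`Yᵀ Y = Eᵀ E - Eᵀ P E + Rᵀ (A Aᵀ)⁻¹ R` with `P = Aᵀ (A Aᵀ)⁻¹ A`: the cross terms cancel because
`A Aᵀ (A Aᵀ)⁻¹ = 1`. Taking traces and averaging, the first two terms give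
`‖E‖² - tr (Eᵀ P̄ E) ≤ (1 - σ_min P̄) ‖E‖²` for the positive semidefinite average `P̄`, and the
last is at most `‖(A Aᵀ)⁻¹‖₂ ‖Z‡ - Z_ω‖²`; the factor `d_{T_V} p ≥ 1` is slack.
-/

open Matrix
open scoped BigOperators

/-- A real third-order tensor with row index `I`, column index `J`, and `p` frontal slices. -/
abbrev Tensor (I J : Type*) (p : ℕ) := I → J → Fin p → ℝ

namespace Tensor

variable {I J K : Type*} {p : ℕ}

/-- Block-circulant matricization: `bcirc A [(i,k),(j,l)] = A i j ((k - l) mod p)`. -/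
def bcirc (A : Tensor I J p) : Matrix (I × Fin p) (J × Fin p) ℝ :=
  Matrix.of fun ik jl => A ik.1 jl.1 (ik.2 - jl.2)

/-- Unfolding along the second mode: `unfold B [(j,k), i] = B j i k`. -/
def unfold {S : Type*} (B : Tensor J S p) : Matrix (J × Fin p) S ℝ :=
  Matrix.of fun jk s => B jk.1 s jk.2

/-- The t-product, the unique tensor with `unfold (A ∗ B) = bcirc A * unfold B`. -/
def tprod [Fintype J] (A : Tensor I J p) (B : Tensor J K p) : Tensor I K p :=
  fun i s k => ∑ j : J, ∑ l : Fin p, A i j (k - l) * B j s l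

/-- Tensor transpose: `Aᵀ j i k = A i j ((-k) mod p)`. -/
def ttrans (A : Tensor I J p) : Tensor J I p := fun j i k => A i j (-k)

/-- The identity tensor: first frontal slice is the identity, the others are zero. -/
def tid (I : Type*) [DecidableEq I] (p : ℕ) : Tensor I I p :=
  fun i j k => if i = j ∧ (k : ℕ) = 0 then 1 else 0

/-- t-invertibility of a square tensor. -/
def TInvertible [Fintype I] [DecidableEq I] (S : Tensor I I p) : Prop :=
  ∃ T : Tensor I I p, tprod S T = tid I p ∧ tprod T S = tid I p

open Classical in
/-- The t-inverse of a square tensor (junk value when not t-invertible). -/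
noncomputable def tinv [Fintype I] [DecidableEq I] (S : Tensor I I p) : Tensor I I p :=
  if h : TInvertible S then h.choose else 0

/-- The projection tensor `P_M = Mᵀ ∗ (M ∗ Mᵀ)⁻¹ ∗ M`. -/
noncomputable def proj [Fintype I] [DecidableEq I] [Fintype J] (M : Tensor I J p) :
    Tensor J J p :=
  tprod (ttrans M) (tprod (tinv (tprod M (ttrans M))) M)

/-- The projection tensor `P_{Mᵀ} = M ∗ (Mᵀ ∗ M)⁻¹ ∗ Mᵀ`. -/
noncomputable def projT [Fintype I] [Fintype J] [DecidableEq J] (M : Tensor I J p) :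
    Tensor I I p :=
  tprod M (tprod (tinv (tprod (ttrans M) M)) (ttrans M))

/-- The Frobenius inner product of two tensors. -/
def tinner [Fintype I] [Fintype J] (A B : Tensor I J p) : ℝ :=
  ∑ i : I, ∑ j : J, ∑ k : Fin p, A i j k * B i j k

/-- The squared Frobenius norm of a tensor. -/
def frobSq [Fintype I] [Fintype J] (A : Tensor I J p) : ℝ :=
  ∑ i : I, ∑ j : J, ∑ k : Fin p, (A i j k) ^ 2

/-- The Frobenius norm of a tensor. -/
noncomputable def frobNorm [Fintype I] [Fintype J] (A : Tensor I J p) : ℝ :=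
  Real.sqrt (frobSq A)

/-- The subtensor of the row slices of `U` indexed by `μ`. -/
def rowSub (U : Tensor I J p) (μ : Finset I) : Tensor {i // i ∈ μ} J p :=
  fun i => U i.1

/-- The `j`-th lateral slice of `U`, as an `I × 1 × p` tensor. -/
def latSlice (U : Tensor I J p) (j : J) : Tensor I (Fin 1) p :=
  fun i _ k => U i j k

/-- One (block) Kaczmarz step for the system with operator `U`, sampled row block `μ`,
current iterate `X` and measurement block `Bμ`:
`X ← X - U_μᵀ ∗ (U_μ ∗ U_μᵀ)⁻¹ ∗ (U_μ ∗ X - Bμ)`. -/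
noncomputable def kaczStep [DecidableEq I] [Fintype J] (U : Tensor I J p) (μ : Finset I)
    (X : Tensor J K p) (Bμ : Tensor {i // i ∈ μ} K p) : Tensor J K p :=
  X - tprod (ttrans (rowSub U μ))
    (tprod (tinv (tprod (rowSub U μ) (ttrans (rowSub U μ))))
      (tprod (rowSub U μ) X - Bμ))

/-- One extended (column-like) step:
`W ← W - U_{:j:} ∗ (U_{:j:}ᵀ ∗ U_{:j:})⁻¹ ∗ (U_{:j:}ᵀ ∗ W)`. -/
noncomputable def extStep [Fintype I] (U : Tensor I J p) (j : J) (W : Tensor I K p) :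
    Tensor I K p :=
  W - tprod (latSlice U j)
    (tprod (tinv (tprod (ttrans (latSlice U j)) (latSlice U j)))
      (tprod (ttrans (latSlice U j)) W))

end Tensor

/-- Squared Frobenius norm of a real matrix. -/
def matFrobSq {I J : Type*} [Fintype I] [Fintype J] (A : Matrix I J ℝ) : ℝ :=
  ∑ i : I, ∑ j : J, (A i j) ^ 2

/-- Spectral norm (largest singular value) of a real matrix, as the supremum of `‖A x‖`
over unit vectors `x`. -/
noncomputable def specNorm {I J : Type*} [Fintype I] [Fintype J] (A : Matrix I J ℝ) : ℝ :=
  sSup {r : ℝ | ∃ x : J → ℝ, (∑ j : J, (x j) ^ 2) = 1 ∧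
    r = Real.sqrt (∑ i : I, (A.mulVec x i) ^ 2)}

/-- Smallest eigenvalue of a symmetric real matrix, via the Rayleigh quotient:
`σ_min(S) = inf {xᵀ S x : ‖x‖ = 1}`. -/
noncomputable def minEig {I : Type*} [Fintype I] (S : Matrix I I ℝ) : ℝ :=
  sInf {r : ℝ | ∃ x : I → ℝ, (∑ i : I, (x i) ^ 2) = 1 ∧
    r = ∑ i : I, x i * S.mulVec x i}

section BlockKaczmarz

variable {α β γ : Type*} [Fintype α] [DecidableEq α] [Fintype β]

lemma transpose_mul_self_blockKaczmarz {A : Matrix α β ℝ} (hA : IsUnit (A * Aᵀ).det)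
    (E : Matrix β γ ℝ) (R : Matrix α γ ℝ) :
    (E - Aᵀ * (A * Aᵀ)⁻¹ * (A * E + R))ᵀ * (E - Aᵀ * (A * Aᵀ)⁻¹ * (A * E + R)) =
      Eᵀ * E - Eᵀ * (Aᵀ * (A * Aᵀ)⁻¹ * A) * E + Rᵀ * (A * Aᵀ)⁻¹ * R := by
  set G := (A * Aᵀ)⁻¹
  have hG : Gᵀ = G := by
    rw [transpose_nonsing_inv, transpose_mul, transpose_transpose]
  have hcancel : ∀ Y : Matrix α γ ℝ, G * (A * (Aᵀ * (G * Y))) = G * Y := fun Y => by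
    rw [← Matrix.mul_assoc A, ← Matrix.mul_assoc (A * Aᵀ), mul_nonsing_inv _ hA, Matrix.one_mul]
  simp only [transpose_sub, transpose_mul, transpose_add, transpose_transpose, hG,
    Matrix.sub_mul, Matrix.mul_sub, Matrix.add_mul, Matrix.mul_add, Matrix.mul_assoc, hcancel]
  abel

lemma posSemidef_transpose_mul_inv_mul (A : Matrix α β ℝ) :
    (Aᵀ * (A * Aᵀ)⁻¹ * A).PosSemidef := by
  simpa [conjTranspose_eq_transpose_of_trivial] using
    (posSemidef_self_mul_conjTranspose A).inv.conjTranspose_mul_mul_same A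

end BlockKaczmarz

lemma matFrobSq_eq_trace {α β : Type*} [Fintype α] [Fintype β] (A : Matrix α β ℝ) :
    matFrobSq A = (Aᵀ * A).trace := by
  simp only [matFrobSq, trace, diag, mul_apply, transpose_apply, sq]
  exact Finset.sum_comm

section Rayleigh

variable {I J K : Type*} [Fintype I] [Fintype J] [Fintype K]

lemma sum_sq_smul (c : ℝ) (x : J → ℝ) : ∑ j, (c • x) j ^ 2 = c ^ 2 * ∑ j, x j ^ 2 := by
  simp [mul_pow, Finset.mul_sum]

lemma exists_sq_mul_sum_sq_eq_one {x : J → ℝ} (hx : x ≠ 0) :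
    ∃ c : ℝ, c ^ 2 * ∑ j, x j ^ 2 = 1 := by
  have hpos : 0 < ∑ j, x j ^ 2 := by
    obtain ⟨j, hj⟩ := Function.ne_iff.mp hx
    exact Finset.sum_pos' (fun _ _ => sq_nonneg _) ⟨j, Finset.mem_univ j, sq_pos_of_ne_zero hj⟩
  exact ⟨√(∑ j, x j ^ 2)⁻¹, by rw [Real.sq_sqrt (inv_nonneg.mpr hpos.le), inv_mul_cancel₀ hpos.ne']⟩

lemma minEig_mul_sum_sq_le {S : Matrix J J ℝ} (hS : S.PosSemidef) (x : J → ℝ) :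
    minEig S * ∑ j, x j ^ 2 ≤ x ⬝ᵥ S *ᵥ x := by
  rcases eq_or_ne x 0 with rfl | hx
  · simp
  obtain ⟨c, hc⟩ := exists_sq_mul_sum_sq_eq_one hx
  have hbdd : BddBelow {r : ℝ | ∃ y : J → ℝ, ∑ j, y j ^ 2 = 1 ∧ r = ∑ j, y j * S.mulVec y j} :=
    ⟨0, fun _ ⟨y, _, hr⟩ => hr ▸ (by simpa using hS.dotProduct_mulVec_nonneg y : 0 ≤ y ⬝ᵥ S *ᵥ y)⟩
  have hle : minEig S ≤ c ^ 2 * (x ⬝ᵥ S *ᵥ x) := by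
    refine csInf_le hbdd ⟨c • x, by rw [sum_sq_smul, hc], ?_⟩
    change _ = (c • x) ⬝ᵥ S *ᵥ (c • x)
    rw [mulVec_smul, smul_dotProduct, dotProduct_smul, smul_eq_mul, smul_eq_mul]
    ring
  calc minEig S * ∑ j, x j ^ 2 ≤ c ^ 2 * (x ⬝ᵥ S *ᵥ x) * ∑ j, x j ^ 2 :=
        mul_le_mul_of_nonneg_right hle (Finset.sum_nonneg fun _ _ => sq_nonneg _)
    _ = x ⬝ᵥ S *ᵥ x := by rw [mul_right_comm, hc, one_mul]

lemma specNorm_nonneg (A : Matrix I J ℝ) : 0 ≤ specNorm A :=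
  Real.sSup_nonneg fun _ ⟨_, _, hr⟩ => hr ▸ Real.sqrt_nonneg _

lemma bddAbove_specNorm_set (A : Matrix I J ℝ) :
    BddAbove {r : ℝ | ∃ x : J → ℝ, ∑ j, x j ^ 2 = 1 ∧ r = √(∑ i, (A *ᵥ x) i ^ 2)} := by
  refine ⟨√(matFrobSq A), fun _ ⟨x, hx, hr⟩ => hr ▸ Real.sqrt_le_sqrt ?_⟩
  refine Finset.sum_le_sum fun i _ => ?_
  simpa [hx, mulVec, dotProduct] using Finset.sum_mul_sq_le_sq_mul_sq Finset.univ (A i) x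

lemma sum_sq_mulVec_le (A : Matrix I J ℝ) (x : J → ℝ) :
    ∑ i, (A *ᵥ x) i ^ 2 ≤ specNorm A ^ 2 * ∑ j, x j ^ 2 := by
  rcases eq_or_ne x 0 with rfl | hx
  · simp
  obtain ⟨c, hc⟩ := exists_sq_mul_sum_sq_eq_one hx
  have hle : c ^ 2 * ∑ i, (A *ᵥ x) i ^ 2 ≤ specNorm A ^ 2 := by
    rw [← sum_sq_smul, ← mulVec_smul, ← Real.sqrt_le_left (specNorm_nonneg A)]
    exact le_csSup (bddAbove_specNorm_set A) ⟨c • x, by rw [sum_sq_smul, hc], rfl⟩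
  calc ∑ i, (A *ᵥ x) i ^ 2 = c ^ 2 * (∑ i, (A *ᵥ x) i ^ 2) * ∑ j, x j ^ 2 := by
        rw [mul_right_comm, hc, one_mul]
    _ ≤ specNorm A ^ 2 * ∑ j, x j ^ 2 :=
        mul_le_mul_of_nonneg_right hle (Finset.sum_nonneg fun _ _ => sq_nonneg _)

lemma dotProduct_mulVec_le_specNorm_mul (A : Matrix J J ℝ) (x : J → ℝ) :
    x ⬝ᵥ A *ᵥ x ≤ specNorm A * ∑ j, x j ^ 2 := by
  have hcs : (x ⬝ᵥ A *ᵥ x) ^ 2 ≤ (specNorm A * ∑ j, x j ^ 2) ^ 2 :=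
    calc (x ⬝ᵥ A *ᵥ x) ^ 2 ≤ (∑ j, x j ^ 2) * ∑ j, (A *ᵥ x) j ^ 2 :=
          Finset.sum_mul_sq_le_sq_mul_sq Finset.univ x (A *ᵥ x)
      _ ≤ (∑ j, x j ^ 2) * (specNorm A ^ 2 * ∑ j, x j ^ 2) :=
          mul_le_mul_of_nonneg_left (sum_sq_mulVec_le A x)
            (Finset.sum_nonneg fun _ _ => sq_nonneg _)
      _ = (specNorm A * ∑ j, x j ^ 2) ^ 2 := by ring
  exact (le_abs_self _).trans <| abs_le_of_sq_le_sq hcs <|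
    mul_nonneg (specNorm_nonneg A) (Finset.sum_nonneg fun _ _ => sq_nonneg _)

lemma trace_transpose_mul_mul_eq_sum (S : Matrix J J ℝ) (X : Matrix J K ℝ) :
    (Xᵀ * S * X).trace = ∑ k, Xᵀ k ⬝ᵥ S *ᵥ Xᵀ k := by
  simp only [trace, diag, mul_apply, transpose_apply, mulVec, dotProduct, Finset.sum_mul,
    Finset.mul_sum, mul_assoc]
  exact Finset.sum_congr rfl fun _ _ => Finset.sum_comm

lemma matFrobSq_eq_sum (X : Matrix J K ℝ) : matFrobSq X = ∑ k, ∑ j, Xᵀ k j ^ 2 :=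
  Finset.sum_comm

lemma minEig_mul_matFrobSq_le {S : Matrix J J ℝ} (hS : S.PosSemidef) (X : Matrix J K ℝ) :
    minEig S * matFrobSq X ≤ (Xᵀ * S * X).trace := by
  rw [trace_transpose_mul_mul_eq_sum, matFrobSq_eq_sum, Finset.mul_sum]
  exact Finset.sum_le_sum fun k _ => minEig_mul_sum_sq_le hS _

lemma trace_le_specNorm_mul_matFrobSq (A : Matrix J J ℝ) (X : Matrix J K ℝ) :
    (Xᵀ * A * X).trace ≤ specNorm A * matFrobSq X := by
  rw [trace_transpose_mul_mul_eq_sum, matFrobSq_eq_sum, Finset.mul_sum]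
  exact Finset.sum_le_sum fun k _ => dotProduct_mulVec_le_specNorm_mul A _

end Rayleigh

section WeightedSums

variable {Ω ι : Type*} (S : Finset Ω) (T : Finset ι) {q : Ω → ℝ} {w : ι → ℝ}

lemma sum_sum_mul_mul_sub_add (hq : ∑ ω ∈ S, q ω = 1) (hw : ∑ ν ∈ T, w ν = 1) (f : ℝ)
    (a : ι → ℝ) (b : Ω → ι → ℝ) :
    ∑ ω ∈ S, ∑ ν ∈ T, q ω * w ν * (f - a ν + b ω ν) =
      f - ∑ ν ∈ T, w ν * a ν + ∑ ω ∈ S, ∑ ν ∈ T, q ω * w ν * b ω ν := by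
  simp only [mul_add, mul_sub, Finset.sum_add_distrib, Finset.sum_sub_distrib, mul_assoc,
    ← Finset.mul_sum, ← Finset.sum_mul, hq, hw, one_mul]

lemma sum_sum_mul_mul_le_mul (hq : ∀ ω ∈ S, 0 ≤ q ω) (hw : ∀ ν ∈ T, 0 ≤ w ν)
    {b : Ω → ι → ℝ} {s : ι → ℝ} {z : Ω → ℝ} (hb : ∀ ω ∈ S, ∀ ν ∈ T, b ω ν ≤ s ν * z ω) :
    ∑ ω ∈ S, ∑ ν ∈ T, q ω * w ν * b ω ν ≤ (∑ ν ∈ T, w ν * s ν) * ∑ ω ∈ S, q ω * z ω := by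
  rw [Finset.sum_mul_sum, Finset.sum_comm]
  refine Finset.sum_le_sum fun ν hν => Finset.sum_le_sum fun ω hω => ?_
  calc q ω * w ν * b ω ν ≤ q ω * w ν * (s ν * z ω) :=
        mul_le_mul_of_nonneg_left (hb ω hω ν hν) (mul_nonneg (hq ω hω) (hw ν hν))
    _ = w ν * s ν * (q ω * z ω) := by ring

end WeightedSums

namespace Tensor

variable {I J K : Type*} {p : ℕ}

lemma unfold_tprod [Fintype J] (A : Tensor I J p) (B : Tensor J K p) :
    unfold (tprod A B) = bcirc A * unfold B := by
  ext ⟨i, k⟩ s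
  simp [unfold, tprod, bcirc, Matrix.mul_apply, Fintype.sum_prod_type]

lemma unfold_sub (A B : Tensor J K p) : unfold (A - B) = unfold A - unfold B := rfl

lemma bcirc_tprod [NeZero p] [Fintype J] (A : Tensor I J p) (B : Tensor J K p) :
    bcirc (tprod A B) = bcirc A * bcirc B := by
  ext ⟨i, k⟩ ⟨j, l⟩
  simp only [bcirc, tprod, Matrix.of_apply, Matrix.mul_apply, Fintype.sum_prod_type]
  refine Finset.sum_congr rfl fun j' _ => Fintype.sum_equiv (Equiv.addRight l) _ _ fun l' => ?_
  simp [sub_add_eq_sub_sub, sub_right_comm]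

lemma bcirc_ttrans (A : Tensor I J p) : bcirc (ttrans A) = (bcirc A)ᵀ := by
  ext ⟨j, l⟩ ⟨i, k⟩
  have : NeZero p := ⟨fun h => by subst h; exact k.elim0⟩
  simp [bcirc, ttrans, neg_sub]

lemma bcirc_tid [DecidableEq I] : bcirc (tid I p) = 1 := by
  ext ⟨i, k⟩ ⟨j, l⟩
  have : NeZero p := ⟨fun h => by subst h; exact k.elim0⟩
  simp [bcirc, tid, Matrix.one_apply, sub_eq_zero]

lemma tprod_tinv [Fintype I] [DecidableEq I] {S : Tensor I I p} (h : TInvertible S) :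
    tprod S (tinv S) = tid I p := by
  rw [tinv, dif_pos h]
  exact h.choose_spec.1

lemma bcirc_tinv [NeZero p] [Fintype I] [DecidableEq I] {S : Tensor I I p}
    (h : TInvertible S) : bcirc (tinv S) = (bcirc S)⁻¹ :=
  (Matrix.inv_eq_right_inv (by rw [← bcirc_tprod, tprod_tinv h, bcirc_tid])).symm

lemma frobSq_eq_matFrobSq_unfold [Fintype J] [Fintype K] (A : Tensor J K p) :
    frobSq A = matFrobSq (unfold A) := by
  simp only [frobSq, matFrobSq, unfold, Matrix.of_apply, Fintype.sum_prod_type]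
  exact Finset.sum_congr rfl fun j _ => Finset.sum_comm

lemma frobSq_nonneg [Fintype I] [Fintype J] (A : Tensor I J p) : 0 ≤ frobSq A := by
  unfold frobSq
  positivity

lemma frobSq_rowSub_le [Fintype I] [Fintype J] (U : Tensor I J p) (μ : Finset I) :
    frobSq (rowSub U μ) ≤ frobSq U := by
  simp only [frobSq, rowSub]
  rw [Finset.sum_coe_sort μ fun i => ∑ j : J, ∑ k : Fin p, U i j k ^ 2]
  exact Finset.sum_le_sum_of_subset_of_nonneg (Finset.subset_univ μ) fun i _ _ =>
    Finset.sum_nonneg fun _ _ => Finset.sum_nonneg fun _ _ => sq_nonneg _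

section KaczmarzStep

variable [NeZero p]

lemma bcirc_proj [Fintype I] [DecidableEq I] [Fintype J] {M : Tensor I J p}
    (h : TInvertible (tprod M (ttrans M))) :
    bcirc (proj M) = (bcirc M)ᵀ * (bcirc M * (bcirc M)ᵀ)⁻¹ * bcirc M := by
  rw [proj, bcirc_tprod, bcirc_tprod, bcirc_tinv h, bcirc_tprod, bcirc_ttrans, Matrix.mul_assoc]

variable [DecidableEq I] [Fintype J]

lemma unfold_kaczStep_sub {U : Tensor I J p} {μ : Finset I}
    (h : TInvertible (tprod (rowSub U μ) (ttrans (rowSub U μ))))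
    (X Y : Tensor J K p) (B : Tensor {i // i ∈ μ} K p) :
    unfold (kaczStep U μ X B - Y) =
      unfold (X - Y) - (bcirc (rowSub U μ))ᵀ * (bcirc (rowSub U μ) * (bcirc (rowSub U μ))ᵀ)⁻¹ *
        (bcirc (rowSub U μ) * unfold (X - Y) + unfold (rowSub (tprod U Y) μ - B)) := by
  have hY : tprod (rowSub U μ) Y = rowSub (tprod U Y) μ := rfl
  simp only [kaczStep, unfold_sub, unfold_tprod, bcirc_tinv h, bcirc_tprod, bcirc_ttrans, ← hY,
    Matrix.mul_sub, Matrix.mul_add, Matrix.mul_assoc]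
  abel

variable [Fintype K]

lemma frobSq_kaczStep_sub {U : Tensor I J p} {μ : Finset I}
    (h : TInvertible (tprod (rowSub U μ) (ttrans (rowSub U μ))))
    (X Y : Tensor J K p) (B : Tensor {i // i ∈ μ} K p) :
    frobSq (kaczStep U μ X B - Y) =
      frobSq (X - Y) - ((unfold (X - Y))ᵀ * bcirc (proj (rowSub U μ)) * unfold (X - Y)).trace +
        ((unfold (rowSub (tprod U Y) μ - B))ᵀ * (bcirc (rowSub U μ) * (bcirc (rowSub U μ))ᵀ)⁻¹ *
          unfold (rowSub (tprod U Y) μ - B)).trace := by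
  have hA : IsUnit (bcirc (rowSub U μ) * (bcirc (rowSub U μ))ᵀ).det := by
    rw [← bcirc_ttrans, ← bcirc_tprod]
    exact isUnit_det_of_right_inverse (by rw [← bcirc_tprod, tprod_tinv h, bcirc_tid])
  rw [frobSq_eq_matFrobSq_unfold, frobSq_eq_matFrobSq_unfold, matFrobSq_eq_trace,
    matFrobSq_eq_trace, unfold_kaczStep_sub h, transpose_mul_self_blockKaczmarz hA, bcirc_proj h,
    trace_add, trace_sub]

end KaczmarzStep

section Averages

variable {Ω : Type*} [DecidableEq I] [Fintype J] [Fintype K]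
  {T : Finset (Finset I)} {w : Finset I → ℝ} (S : Finset Ω) {q : Ω → ℝ}

lemma posSemidef_sum_smul_bcirc_proj [NeZero p] {U : Tensor I J p} (hw : ∀ ν ∈ T, 0 ≤ w ν)
    (hinv : ∀ ν ∈ T, TInvertible (tprod (rowSub U ν) (ttrans (rowSub U ν)))) :
    (∑ ν ∈ T, w ν • bcirc (proj (rowSub U ν))).PosSemidef :=
  posSemidef_sum _ fun ν hν => by
    simpa only [bcirc_proj (hinv ν hν)] using
      (posSemidef_transpose_mul_inv_mul _).smul (hw ν hν)

lemma sum_sum_frobSq_kaczStep_sub [NeZero p] {U : Tensor I J p} (hq : ∑ ω ∈ S, q ω = 1)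
    (hw : ∑ ν ∈ T, w ν = 1)
    (hinv : ∀ ν ∈ T, TInvertible (tprod (rowSub U ν) (ttrans (rowSub U ν))))
    (X Y : Tensor J K p) (Z : Ω → Tensor I K p) :
    ∑ ω ∈ S, ∑ ν ∈ T, q ω * w ν * frobSq (kaczStep U ν X (rowSub (Z ω) ν) - Y) =
      frobSq (X - Y) - ((unfold (X - Y))ᵀ * (∑ ν ∈ T, w ν • bcirc (proj (rowSub U ν))) *
          unfold (X - Y)).trace +
        ∑ ω ∈ S, ∑ ν ∈ T, q ω * w ν * ((unfold (rowSub (tprod U Y - Z ω) ν))ᵀ *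
          (bcirc (rowSub U ν) * (bcirc (rowSub U ν))ᵀ)⁻¹ *
            unfold (rowSub (tprod U Y - Z ω) ν)).trace := by
  have hmean : ((unfold (X - Y))ᵀ * (∑ ν ∈ T, w ν • bcirc (proj (rowSub U ν))) *
      unfold (X - Y)).trace =
        ∑ ν ∈ T, w ν * ((unfold (X - Y))ᵀ * bcirc (proj (rowSub U ν)) * unfold (X - Y)).trace := by
    simp only [Matrix.mul_sum, Matrix.sum_mul, trace_sum, Matrix.mul_smul, Matrix.smul_mul,
      trace_smul, smul_eq_mul]
  rw [hmean, ← sum_sum_mul_mul_sub_add S T hq hw]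
  exact Finset.sum_congr rfl fun ω _ => Finset.sum_congr rfl fun ν hν => by
    rw [frobSq_kaczStep_sub (hinv ν hν)]
    rfl

lemma sum_sum_trace_residual_le [Fintype I] (hq : ∀ ω ∈ S, 0 ≤ q ω) (hw : ∀ ν ∈ T, 0 ≤ w ν)
    (U : Tensor I J p) (Y : Tensor J K p) (Z : Ω → Tensor I K p) :
    ∑ ω ∈ S, ∑ ν ∈ T, q ω * w ν * ((unfold (rowSub (tprod U Y - Z ω) ν))ᵀ *
        (bcirc (rowSub U ν) * (bcirc (rowSub U ν))ᵀ)⁻¹ *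
          unfold (rowSub (tprod U Y - Z ω) ν)).trace ≤
      (∑ ν ∈ T, w ν * specNorm ((bcirc (rowSub U ν) * (bcirc (rowSub U ν))ᵀ)⁻¹)) *
        ∑ ω ∈ S, q ω * frobSq (tprod U Y - Z ω) :=
  sum_sum_mul_mul_le_mul S T hq hw fun ω _ ν _ =>
    (trace_le_specNorm_mul_matFrobSq _ _).trans <| mul_le_mul_of_nonneg_left
      (by rw [← frobSq_eq_matFrobSq_unfold]; exact frobSq_rowSub_le _ ν) (specNorm_nonneg _)

end Averages

end Tensor

open Tensor in
/-- expectation decoupling for the inner step of FacTBRK, where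
`X⁺(ω,ν) = X − V_νᵀ∗(V_ν∗V_νᵀ)⁻¹∗(V_ν∗X − (Z_ω)_ν)` and `V∗X‡ = Z‡`. -/
theorem stmt11 {m₁ n l p : ℕ} (V : Tensor (Fin m₁) (Fin n) p)
    (TV : Finset (Finset (Fin m₁))) (hTVne : ∀ ν ∈ TV, ν.Nonempty)
    (probV : Finset (Fin m₁) → ℝ) (hprob : ∀ ν ∈ TV, 0 ≤ probV ν)
    (hprobsum : ∑ ν ∈ TV, probV ν = 1)
    (hinv : ∀ ν ∈ TV, TInvertible (tprod (rowSub V ν) (ttrans (rowSub V ν))))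
    (Zd : Tensor (Fin m₁) (Fin l) p) (Xd : Tensor (Fin n) (Fin l) p)
    (hXd : tprod V Xd = Zd)
    {Ω : Type*} [Fintype Ω] (Zfam : Ω → Tensor (Fin m₁) (Fin l) p)
    (qw : Ω → ℝ) (hqw : ∀ ω, 0 ≤ qw ω) (hqwsum : ∑ ω, qw ω = 1)
    (X : Tensor (Fin n) (Fin l) p) :
    ∑ ω : Ω, ∑ ν ∈ TV, qw ω * probV ν *
        frobSq (kaczStep V ν X (rowSub (Zfam ω) ν) - Xd) ≤
      (1 - minEig (∑ ν ∈ TV, probV ν • bcirc (proj (rowSub V ν)))) * frobSq (X - Xd) +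
        ((TV.sup Finset.card : ℕ) : ℝ) * p *
          (∑ ν ∈ TV, probV ν * specNorm ((bcirc (rowSub V ν) * (bcirc (rowSub V ν))ᵀ)⁻¹)) *
          (∑ ω : Ω, qw ω * frobSq (Zd - Zfam ω)) := by
  rcases Nat.eq_zero_or_pos p with rfl | hp
  · simp [frobSq]
  have : NeZero p := ⟨hp.ne'⟩
  subst hXd
  have hcontract := minEig_mul_matFrobSq_le (posSemidef_sum_smul_bcirc_proj hprob hinv)
    (unfold (X - Xd))
  rw [← frobSq_eq_matFrobSq_unfold] at hcontract
  have hnoise := sum_sum_trace_residual_le Finset.univ (fun ω _ => hqw ω) hprob V Xd Zfam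
  obtain ⟨ν₀, hν₀⟩ := Finset.nonempty_of_sum_ne_zero (hprobsum ▸ one_ne_zero)
  have hdp : (1 : ℝ) ≤ (TV.sup Finset.card : ℕ) * p := one_le_mul_of_one_le_of_one_le
    (mod_cast (hTVne ν₀ hν₀).card_pos.trans_le (Finset.le_sup hν₀)) (mod_cast hp)
  have hnoise_nonneg := mul_nonneg
    (Finset.sum_nonneg fun ν hν => mul_nonneg (hprob ν hν) (specNorm_nonneg
      ((bcirc (rowSub V ν) * (bcirc (rowSub V ν))ᵀ)⁻¹)))
    (Finset.sum_nonneg (s := .univ) fun ω _ =>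
      mul_nonneg (hqw ω) (frobSq_nonneg (tprod V Xd - Zfam ω)))
  rw [sum_sum_frobSq_kaczStep_sub Finset.univ hqwsum hprobsum hinv]
  linarith [le_mul_of_one_le_left hnoise_nonneg hdp]
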